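/- Let v ∈ H satisfy I(v) := Σ_j‖v_j‖_Σ² − Σ_{j,k}a_{jk}∫|v_jv_k|^p dx ≤ 0 and K(v) := (2/N)Σ_j(‖∇v_j‖² − ‖xv_j‖²) − ((p−1)/p)Σ_{j,k}a_{jk}∫|v_jv_k|^p dx ≤ 0, with p > p₁ := 1 + (2/N²)(1+√(1+N²)). Then for v_λ(x) := λ^{N/2}v(λx), there exists δ > 0 such that K(v_λ) < 0 for all λ ∈ (1, 1+δ). -/

import Mathlib

/-!
Write `G, X, M, S` for the kinetic, moment, mass and interaction terms of `v`; the scaling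
`v_λ` multiplies them by `λ², λ⁻², 1, λ^{N(p-1)}`. The constraint `I(v) ≤ 0` gives `G + X ≤ S`,
and `S > 0` since `v ≠ 0`; together with `λ² + λ⁻² ≥ 2` this yields
`λ²G − λ⁻²X ≤ G − X + (λ² − 1)S`. Combining with `K(v) ≤ 0` and Bernoulli's inequality
`λ^q ≥ 1 + q(λ − 1)` for `q = N(p − 1)`,
`K(v_λ) ≤ (λ − 1) S (2(λ + 1)/N − (p − 1)q/p)`, which is negative for `λ` near `1` as soon as
`N²(p − 1)² > 4p`. This is exactly `p > p₁`: `p₁ − 1` is the positive root of `N²y² = 4(1 + y)`.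
-/

open MeasureTheory

/-- The Virial functional `K = K_{1,−2/N}`. -/
noncomputable def KV (N m : ℕ) (p : ℝ) (a : Fin m → Fin m → ℝ)
    (v : Fin m → EuclideanSpace ℝ (Fin N) → ℂ) : ℝ :=
  (2/(N:ℝ)) * (∑ j, ((∫ x, ‖fderiv ℝ (v j) x‖^2) - ∫ x, ‖x‖^2 * ‖v j x‖^2))
    - ((p-1)/p) * ∑ j, ∑ k, a j k * ∫ x, (‖v j x‖ * ‖v k x‖) ^ p

/-- The Nehari functional `I = K_{1,0}`. -/
noncomputable def IV (N m : ℕ) (p : ℝ) (a : Fin m → Fin m → ℝ)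
    (v : Fin m → EuclideanSpace ℝ (Fin N) → ℂ) : ℝ :=
  (∑ j, ((∫ x, ‖v j x‖^2) + (∫ x, ‖x‖^2 * ‖v j x‖^2)
      + (∫ x, ‖fderiv ℝ (v j) x‖^2)))
    - ∑ j, ∑ k, a j k * ∫ x, (‖v j x‖ * ‖v k x‖) ^ p

/-- The `L²`-invariant scaling `v_λ(x) = λ^{N/2} v(λ x)`. -/
noncomputable def scaleL (N : ℕ) (lam : ℝ)
    (v : EuclideanSpace ℝ (Fin N) → ℂ) : EuclideanSpace ℝ (Fin N) → ℂ :=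
  fun x => (lam ^ ((N:ℝ)/2) : ℝ) • v (lam • x)

lemma integral_eq_of_eq_pow_finrank_mul_comp_smul {E : Type*} [NormedAddCommGroup E]
    [NormedSpace ℝ E] [MeasurableSpace E] [BorelSpace E] [FiniteDimensional ℝ E] (μ : Measure E)
    [μ.IsAddHaarMeasure] {f g : E → ℝ} {lam : ℝ} (hlam : 0 < lam)
    (hfg : ∀ x, f x = lam ^ Module.finrank ℝ E * g (lam • x)) :
    ∫ x, f x ∂μ = ∫ x, g x ∂μ := by
  simp_rw [hfg]
  rw [integral_const_mul, Measure.integral_comp_smul_of_nonneg μ g lam (hR := hlam.le),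
    smul_eq_mul, mul_inv_cancel_left₀ (by positivity)]

lemma integral_norm_sq_pos {X F : Type*} [TopologicalSpace X] [MeasurableSpace X]
    [OpensMeasurableSpace X] {μ : Measure X} [μ.IsOpenPosMeasure] [NormedAddCommGroup F]
    {f : X → F} (hf : Continuous f) (hint : Integrable (fun x => ‖f x‖ ^ 2) μ) (hne : f ≠ 0) :
    0 < ∫ x, ‖f x‖ ^ 2 ∂μ := by
  obtain ⟨x, hx⟩ := Function.ne_iff.mp hne
  rw [integral_pos_iff_support_of_nonneg (fun x => by positivity) hint]
  exact (hf.norm.pow 2).isOpen_support.measure_pos μ ⟨x, by simpa using hx⟩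

lemma rpow_div_two_sq {x : ℝ} (hx : 0 ≤ x) (y : ℝ) : (x ^ (y / 2)) ^ 2 = x ^ y := by
  rw [← Real.rpow_natCast, ← Real.rpow_mul hx]
  norm_num

lemma four_mul_lt_sq_mul_sub_one_sq {n p : ℝ} (hn : 0 < n)
    (hp : 1 + 2 / n ^ 2 * (1 + Real.sqrt (1 + n ^ 2)) < p) : 4 * p < n ^ 2 * (p - 1) ^ 2 := by
  set s := Real.sqrt (1 + n ^ 2)
  have hs : s ^ 2 = 1 + n ^ 2 := Real.sq_sqrt (by positivity)
  have hs0 : 0 ≤ s := Real.sqrt_nonneg _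
  have ht : 2 * (1 + s) < n ^ 2 * (p - 1) := by
    have h : 2 / n ^ 2 * (1 + s) < p - 1 := by linarith
    rw [div_mul_eq_mul_div, div_lt_iff₀ (by positivity)] at h
    linarith
  nlinarith [mul_lt_mul_of_pos_left ht (by linarith : (0 : ℝ) < n ^ 2 * (p - 1) - 2)]

lemma sq_mul_sub_inv_sq_mul_le {lam G X S : ℝ} (hlam : 1 ≤ lam) (hX : 0 ≤ X)
    (hGX : G + X ≤ S) : lam ^ 2 * G - lam⁻¹ ^ 2 * X ≤ G - X + (lam ^ 2 - 1) * S := by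
  have hinv : lam⁻¹ ^ 2 ≥ 2 - lam ^ 2 := by
    have h := mul_inv_cancel₀ (by positivity : lam ≠ 0)
    nlinarith [sq_nonneg (lam - lam⁻¹)]
  nlinarith [mul_le_mul_of_nonneg_left hGX (by nlinarith : (0 : ℝ) ≤ lam ^ 2 - 1)]

lemma exists_forall_scaled_virial_neg {n p G X S : ℝ} (hn : 0 < n) (hp : 1 < p)
    (hpn : 4 * p < n ^ 2 * (p - 1) ^ 2) (hX : 0 ≤ X) (hS : 0 < S) (hGX : G + X ≤ S)
    (hK : 2 / n * (G - X) - (p - 1) / p * S ≤ 0) :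
    ∃ δ > 0, ∀ lam : ℝ, 1 < lam → lam < 1 + δ →
      2 / n * (lam ^ 2 * G - lam⁻¹ ^ 2 * X) - (p - 1) / p * (lam ^ (n * (p - 1)) * S) < 0 := by
  set c := (p - 1) / p
  set q := n * (p - 1)
  have hncq : n * c * q = n ^ 2 * (p - 1) ^ 2 / p := by
    simp only [c, q]; field_simp
  have h4 : 4 < n * c * q := by
    rw [hncq, lt_div_iff₀ (by linarith)]; exact hpn
  have hq : 1 ≤ q := by
    have hq0 : 0 < q := mul_pos hn (by linarith)
    nlinarith [show q ^ 2 = n ^ 2 * (p - 1) ^ 2 by ring]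
  refine ⟨n * c * q / 2 - 2, by linarith, fun lam hlam1 hlam2 => ?_⟩
  have hbern : 1 + q * (lam - 1) ≤ lam ^ q := by
    simpa using one_add_mul_self_le_rpow_one_add (s := lam - 1) (by linarith) hq
  have hslope : 2 / n * (lam + 1) < c * q := by
    rw [div_mul_eq_mul_div, div_lt_iff₀ hn]; nlinarith
  calc 2 / n * (lam ^ 2 * G - lam⁻¹ ^ 2 * X) - c * (lam ^ q * S)
      ≤ 2 / n * (G - X + (lam ^ 2 - 1) * S) - c * ((1 + q * (lam - 1)) * S) := by
        gcongr
        exact sq_mul_sub_inv_sq_mul_le hlam1.le hX hGX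
    _ ≤ (lam - 1) * S * (2 / n * (lam + 1) - c * q) := by linarith
    _ < 0 := mul_neg_of_pos_of_neg (by positivity) (by linarith)

section Functionals

variable {N m : ℕ}

noncomputable def mass (v : Fin m → EuclideanSpace ℝ (Fin N) → ℂ) : ℝ :=
  ∑ j, ∫ x, ‖v j x‖ ^ 2

noncomputable def dirichletEnergy (v : Fin m → EuclideanSpace ℝ (Fin N) → ℂ) : ℝ :=
  ∑ j, ∫ x, ‖fderiv ℝ (v j) x‖ ^ 2

noncomputable def momentOfInertia (v : Fin m → EuclideanSpace ℝ (Fin N) → ℂ) : ℝ :=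
  ∑ j, ∫ x, ‖x‖ ^ 2 * ‖v j x‖ ^ 2

noncomputable def interaction (p : ℝ) (a : Fin m → Fin m → ℝ)
    (v : Fin m → EuclideanSpace ℝ (Fin N) → ℂ) : ℝ :=
  ∑ j, ∑ k, a j k * ∫ x, (‖v j x‖ * ‖v k x‖) ^ p

lemma KV_eq (p : ℝ) (a : Fin m → Fin m → ℝ) (v : Fin m → EuclideanSpace ℝ (Fin N) → ℂ) :
    KV N m p a v = 2 / N * (dirichletEnergy v - momentOfInertia v)
      - (p - 1) / p * interaction p a v := by
  rw [KV, Finset.sum_sub_distrib, dirichletEnergy, momentOfInertia, interaction]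

lemma IV_eq (p : ℝ) (a : Fin m → Fin m → ℝ) (v : Fin m → EuclideanSpace ℝ (Fin N) → ℂ) :
    IV N m p a v = mass v + momentOfInertia v + dirichletEnergy v - interaction p a v := by
  rw [IV, Finset.sum_add_distrib, Finset.sum_add_distrib, mass, momentOfInertia,
    dirichletEnergy, interaction]

lemma mass_pos {v : Fin m → EuclideanSpace ℝ (Fin N) → ℂ} (hv : ∀ j, Continuous (v j))
    (h2 : ∀ j, Integrable (fun x => ‖v j x‖ ^ 2)) (hnz : v ≠ 0) : 0 < mass v := by
  obtain ⟨j, hj⟩ := Function.ne_iff.mp hnz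
  exact Finset.sum_pos' (fun j _ => integral_nonneg fun x => by positivity)
    ⟨j, Finset.mem_univ j, integral_norm_sq_pos (hv j) (h2 j) hj⟩

lemma dirichletEnergy_nonneg (v : Fin m → EuclideanSpace ℝ (Fin N) → ℂ) :
    0 ≤ dirichletEnergy v :=
  Finset.sum_nonneg fun _ _ => integral_nonneg fun _ => by positivity

lemma momentOfInertia_nonneg (v : Fin m → EuclideanSpace ℝ (Fin N) → ℂ) :
    0 ≤ momentOfInertia v :=
  Finset.sum_nonneg fun _ _ => integral_nonneg fun _ => by positivity

lemma norm_scaleL {lam : ℝ} (hlam : 0 ≤ lam) (w : EuclideanSpace ℝ (Fin N) → ℂ)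
    (x : EuclideanSpace ℝ (Fin N)) :
    ‖scaleL N lam w x‖ = lam ^ ((N : ℝ) / 2) * ‖w (lam • x)‖ := by
  rw [scaleL, norm_smul, Real.norm_of_nonneg (Real.rpow_nonneg hlam _)]

lemma norm_fderiv_scaleL {lam : ℝ} (hlam : 0 ≤ lam) {w : EuclideanSpace ℝ (Fin N) → ℂ}
    (hw : Differentiable ℝ w) (x : EuclideanSpace ℝ (Fin N)) :
    ‖fderiv ℝ (scaleL N lam w) x‖ = lam ^ ((N : ℝ) / 2) * (lam * ‖fderiv ℝ w (lam • x)‖) := by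
  have hcomp : Differentiable ℝ (fun y : EuclideanSpace ℝ (Fin N) => w (lam • y)) :=
    hw.comp (differentiable_id.const_smul lam)
  unfold scaleL
  rw [fderiv_fun_const_smul (hcomp x), fderiv_comp_smul, norm_smul, norm_smul,
    Real.norm_of_nonneg (Real.rpow_nonneg hlam _), Real.norm_of_nonneg hlam]

lemma dirichletEnergy_scaleL {lam : ℝ} (hlam : 0 < lam)
    {v : Fin m → EuclideanSpace ℝ (Fin N) → ℂ} (hd : ∀ j, Differentiable ℝ (v j)) :
    dirichletEnergy (fun j => scaleL N lam (v j)) = lam ^ 2 * dirichletEnergy v := by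
  rw [dirichletEnergy, dirichletEnergy, Finset.mul_sum]
  refine Finset.sum_congr rfl fun j _ => ?_
  rw [← integral_const_mul]
  refine integral_eq_of_eq_pow_finrank_mul_comp_smul volume hlam fun x => ?_
  rw [finrank_euclideanSpace_fin, norm_fderiv_scaleL hlam.le (hd j), mul_pow, mul_pow,
    rpow_div_two_sq hlam.le, Real.rpow_natCast]

lemma momentOfInertia_scaleL {lam : ℝ} (hlam : 0 < lam)
    (v : Fin m → EuclideanSpace ℝ (Fin N) → ℂ) :
    momentOfInertia (fun j => scaleL N lam (v j)) = lam⁻¹ ^ 2 * momentOfInertia v := by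
  rw [momentOfInertia, momentOfInertia, Finset.mul_sum]
  refine Finset.sum_congr rfl fun j _ => ?_
  rw [← integral_const_mul]
  refine integral_eq_of_eq_pow_finrank_mul_comp_smul volume hlam fun x => ?_
  rw [finrank_euclideanSpace_fin, norm_scaleL hlam.le, norm_smul, Real.norm_of_nonneg hlam.le,
    mul_pow, rpow_div_two_sq hlam.le, Real.rpow_natCast]
  field_simp

lemma interaction_scaleL {lam : ℝ} (hlam : 0 < lam) (p : ℝ) (a : Fin m → Fin m → ℝ)
    (v : Fin m → EuclideanSpace ℝ (Fin N) → ℂ) :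
    interaction p a (fun j => scaleL N lam (v j)) = lam ^ (N * (p - 1)) * interaction p a v := by
  rw [interaction, interaction, Finset.mul_sum]
  refine Finset.sum_congr rfl fun j _ => ?_
  rw [Finset.mul_sum]
  refine Finset.sum_congr rfl fun k _ => ?_
  rw [mul_left_comm, ← integral_const_mul (lam ^ (N * (p - 1)))]
  congr 1
  refine integral_eq_of_eq_pow_finrank_mul_comp_smul volume hlam fun x => ?_
  rw [finrank_euclideanSpace_fin, norm_scaleL hlam.le, norm_scaleL hlam.le, mul_mul_mul_comm,
    ← sq, rpow_div_two_sq hlam.le, Real.mul_rpow (by positivity) (by positivity),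
    ← Real.rpow_mul hlam.le, ← mul_assoc, ← Real.rpow_natCast lam N, ← Real.rpow_add hlam]
  ring_nf

end Functionals

theorem stmt_16_general (N m : ℕ) (hN : 2 ≤ N) (p : ℝ)
    (hp : 1 + 2/(N:ℝ)^2 * (1 + Real.sqrt (1 + (N:ℝ)^2)) < p)
    (a : Fin m → Fin m → ℝ)
    (v : Fin m → EuclideanSpace ℝ (Fin N) → ℂ)
    (hd : ∀ j, Differentiable ℝ (v j))
    (h2 : ∀ j, Integrable (fun x => ‖v j x‖^2))
    (hnz : v ≠ 0)
    (hI : IV N m p a v ≤ 0) (hK : KV N m p a v ≤ 0) :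
    ∃ δ > (0:ℝ), ∀ lam : ℝ, 1 < lam → lam < 1 + δ →
      KV N m p a (fun j => scaleL N lam (v j)) < 0 := by
  have hn : (0 : ℝ) < N := by exact_mod_cast (by omega : 0 < N)
  have hp1 : 1 < p := lt_of_le_of_lt (le_add_of_nonneg_right (by positivity)) hp
  rw [IV_eq] at hI
  rw [KV_eq] at hK
  have hM := mass_pos (fun j => (hd j).continuous) h2 hnz
  have hG := dirichletEnergy_nonneg v
  have hX := momentOfInertia_nonneg v
  obtain ⟨δ, hδ, hneg⟩ := exists_forall_scaled_virial_neg hn hp1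
    (four_mul_lt_sq_mul_sub_one_sq hn hp) hX (by linarith) (by linarith) hK
  refine ⟨δ, hδ, fun lam hlam1 hlam2 => ?_⟩
  have hlam : 0 < lam := by linarith
  rw [KV_eq, dirichletEnergy_scaleL hlam hd, momentOfInertia_scaleL hlam,
    interaction_scaleL hlam]
  exact hneg lam hlam1 hlam2

/-- If `I(v) ≤ 0` and `K(v) ≤ 0` with `p > p₁`, then `K(v_λ) < 0` for `λ > 1`
close to `1`. -/
theorem stmt_16 (N m : ℕ) (hN : 2 ≤ N) (p : ℝ)
    (hp : 1 + 2/(N:ℝ)^2 * (1 + Real.sqrt (1 + (N:ℝ)^2)) < p)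
    (a : Fin m → Fin m → ℝ) (ha : ∀ j k, 0 < a j k) (hsym : ∀ j k, a j k = a k j)
    (v : Fin m → EuclideanSpace ℝ (Fin N) → ℂ)
    (hd : ∀ j, Differentiable ℝ (v j))
    (h2 : ∀ j, Integrable (fun x => ‖v j x‖^2))
    (hx : ∀ j, Integrable (fun x => ‖x‖^2 * ‖v j x‖^2))
    (hg : ∀ j, Integrable (fun x => ‖fderiv ℝ (v j) x‖^2))
    (hnl : ∀ j k, Integrable (fun x => (‖v j x‖ * ‖v k x‖) ^ p))
    (hnz : v ≠ 0)
    (hI : IV N m p a v ≤ 0) (hK : KV N m p a v ≤ 0) :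
    ∃ δ > (0:ℝ), ∀ lam : ℝ, 1 < lam → lam < 1 + δ →
      KV N m p a (fun j => scaleL N lam (v j)) < 0 :=
  stmt_16_general N m hN p hp a v hd h2 hnz hI hK
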